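/- arXiv:2602.15797 — 2 statements merged into one kernel-verified Lean document; each statement's English description precedes it below -/
import Mathlib

section
/- Let p be a prime, S ⊆ ℤ_p finite nonempty, m a positive integer, Ψ(χ) = (m/|S|^2)·Σ_{x,x'∈S} ||χx - χx'||_p^2, B_t = {χ ∈ ℤ_p : Ψ(χ) ≤ t}, and Q_{t,δ} = {x ∈ ℤ_p : Σ_{χ∈B_t} ||χx||_p^2 < δ|B_t|}. Then for every positive integer t, |Q_{t, 10t/m}| ≥ (9/10)|S|. -/
open scoped Classical

/-- For `x ∈ ℤ_p`, the distance of `y/p` to the nearest integer, where `y` represents `x`. -/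
noncomputable def pDist (p : ℕ) (x : ZMod p) : ℝ :=
  |(x.val : ℝ) / p - round ((x.val : ℝ) / p)|

/-- `Ψ(χ) = (m/|S|²) · Σ_{x,x'∈S} ‖χx - χx'‖_p²`. -/
noncomputable def Psi (p : ℕ) (S : Finset (ZMod p)) (m : ℕ) (χ : ZMod p) : ℝ :=
  (m : ℝ) / (S.card : ℝ) ^ 2 * ∑ x ∈ S, ∑ x' ∈ S, pDist p (χ * x - χ * x') ^ 2

/-- `B_t = {χ ∈ ℤ_p : Ψ(χ) ≤ t}`. -/
noncomputable def Bt (p : ℕ) [NeZero p] (S : Finset (ZMod p)) (m : ℕ) (t : ℝ) :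
    Finset (ZMod p) :=
  Finset.univ.filter fun χ => Psi p S m χ ≤ t

/-- `Q_{t,δ} = {x ∈ ℤ_p : Σ_{χ∈B_t} ‖χx‖_p² < δ|B_t|}`. -/
noncomputable def Qt (p : ℕ) [NeZero p] (S : Finset (ZMod p)) (m : ℕ) (t δ : ℝ) :
    Finset (ZMod p) :=
  Finset.univ.filter fun x => ∑ χ ∈ Bt p S m t, pDist p (χ * x) ^ 2 < δ * (Bt p S m t).card

/-!
Let `g x = Σ_{χ ∈ B_t} ‖χx‖_p²`. Summing the defining inequality `Ψ(χ) ≤ t` over `χ ∈ B_t` shows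
that for independent uniform `Y, Y' ∈ S` the expectation of `g (Y - Y')` is at most `t |B_t| / m`,
so by Markov's inequality `Y - Y' ∈ Q_{t, 10t/m}` with probability at least `9/10`. Since
`(y, y') ↦ (y - y', y')` is injective, at most `|Q| |S|` pairs have their difference in `Q`,
hence `(9/10) |S|² ≤ |Q| |S|`.
-/

open Finset

namespace Finset

theorem mul_card_filter_le_le_sum {ι R : Type*} [Semiring R] [PartialOrder R]
    [IsOrderedAddMonoid R] (s : Finset ι) (f : ι → R) (hf : ∀ i ∈ s, 0 ≤ f i) (c : R) :
    c * #(s.filter fun i => c ≤ f i) ≤ ∑ i ∈ s, f i := by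
  calc c * #(s.filter fun i => c ≤ f i)
      = #(s.filter fun i => c ≤ f i) • c := (nsmul_eq_mul' _ _).symm
    _ ≤ ∑ i ∈ s.filter (fun i => c ≤ f i), f i :=
        card_nsmul_le_sum _ _ _ fun i hi => (mem_filter.1 hi).2
    _ ≤ ∑ i ∈ s, f i :=
        sum_le_sum_of_subset_of_nonneg (filter_subset _ _) fun i hi _ => hf i hi

theorem card_filter_sub_mem_le {G : Type*} [AddGroup G] (S Q : Finset G) :
    #((S ×ˢ S).filter fun q => q.1 - q.2 ∈ Q) ≤ #Q * #S := by
  rw [← card_product]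
  refine card_le_card_of_injOn (fun q => (q.1 - q.2, q.2)) ?_ ?_
  · intro q hq
    simp only [coe_filter, mem_product, Set.mem_ofPred_eq] at hq
    exact mem_product.2 ⟨hq.2, hq.1.2⟩
  · intro a _ b _ hab
    simp only [Prod.mk.injEq] at hab
    exact Prod.ext (by simpa [hab.2] using hab.1) hab.2

end Finset

theorem one_sub_mul_card_le_card_filter_lt {G : Type*} [AddGroup G] [Fintype G]
    (S : Finset G) (f : G → ℝ) (hf : ∀ x, 0 ≤ f x) {c ε : ℝ} (hc : 0 < c)
    (h : ∑ y ∈ S, ∑ y' ∈ S, f (y - y') ≤ ε * c * #S ^ 2) :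
    (1 - ε) * #S ≤ #(univ.filter fun x => f x < c) := by
  set Q := univ.filter fun x => f x < c
  set good := (S ×ˢ S).filter fun q => q.1 - q.2 ∈ Q
  set bad := (S ×ˢ S).filter fun q => c ≤ f (q.1 - q.2)
  have markov : c * #bad ≤ c * (ε * #S ^ 2) := by
    refine (mul_card_filter_le_le_sum _ _ (fun q _ => hf _) c).trans ?_
    rw [sum_product]
    linarith
  have split : (#good + #bad : ℝ) = #S ^ 2 := by
    have := card_filter_add_card_filter_not (s := S ×ˢ S) (fun q => q.1 - q.2 ∈ Q)
    have not_good : (S ×ˢ S).filter (fun q => q.1 - q.2 ∉ Q) = bad := filter_congr (by simp [Q])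
    rw [card_product, ← sq, not_good] at this
    exact_mod_cast this
  have injection : (#good : ℝ) ≤ #Q * #S := by exact_mod_cast card_filter_sub_mem_le S Q
  have bad_le := le_of_mul_le_mul_left markov hc
  rcases (#S).eq_zero_or_pos with hS | hS
  · simp [hS]
  refine le_of_mul_le_mul_right ?_ (show (0 : ℝ) < #S by exact_mod_cast hS)
  linarith

theorem pDist_zero (p : ℕ) : pDist p 0 = 0 := by simp [pDist]

section

variable {p : ℕ} [NeZero p] (S : Finset (ZMod p)) (m : ℕ) {t : ℝ}

theorem zero_mem_Bt (ht : 0 ≤ t) : 0 ∈ Bt p S m t := by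
  rw [Bt, mem_filter]
  simpa [Psi, pDist_zero] using ht

theorem mul_sum_sum_pDist_sq_le_of_mem_Bt {χ : ZMod p} (hχ : χ ∈ Bt p S m t) :
    m * ∑ x ∈ S, ∑ x' ∈ S, pDist p (χ * x - χ * x') ^ 2 ≤ t * #S ^ 2 := by
  have hΨ : Psi p S m χ ≤ t := (mem_filter.1 hχ).2
  rcases S.eq_empty_or_nonempty with rfl | hS
  · simp
  have hS' : (0 : ℝ) < #S ^ 2 := by have := hS.card_pos; positivity
  rw [Psi, div_mul_eq_mul_div, div_le_iff₀ hS'] at hΨ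
  exact hΨ

theorem mul_sum_sum_sum_Bt_pDist_sq_le :
    m * ∑ y ∈ S, ∑ y' ∈ S, ∑ χ ∈ Bt p S m t, pDist p (χ * (y - y')) ^ 2
      ≤ t * #S ^ 2 * #(Bt p S m t) := by
  have swap : ∑ y ∈ S, ∑ y' ∈ S, ∑ χ ∈ Bt p S m t, pDist p (χ * (y - y')) ^ 2
      = ∑ χ ∈ Bt p S m t, ∑ y ∈ S, ∑ y' ∈ S, pDist p (χ * y - χ * y') ^ 2 := by
    simp only [mul_sub]
    exact (sum_congr rfl fun _ _ => sum_comm).trans sum_comm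
  calc m * ∑ y ∈ S, ∑ y' ∈ S, ∑ χ ∈ Bt p S m t, pDist p (χ * (y - y')) ^ 2
      = ∑ χ ∈ Bt p S m t, m * ∑ y ∈ S, ∑ y' ∈ S, pDist p (χ * y - χ * y') ^ 2 := by
        rw [swap, mul_sum]
    _ ≤ ∑ _χ ∈ Bt p S m t, t * #S ^ 2 :=
        sum_le_sum fun χ hχ => mul_sum_sum_pDist_sq_le_of_mem_Bt S m hχ
    _ = t * #S ^ 2 * #(Bt p S m t) := by rw [sum_const, nsmul_eq_mul, mul_comm]

end

theorem stmt10_general (p : ℕ) [Fact p.Prime] (S : Finset (ZMod p))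
    (m : ℕ) (hm : 0 < m) (t : ℕ) (ht : 0 < t) :
    (9 / 10 : ℝ) * S.card ≤ ((Qt p S m t (10 * t / m)).card : ℝ) := by
  set B := Bt p S m t
  have hB : (0 : ℝ) < #B := by exact_mod_cast card_pos.2 ⟨0, zero_mem_Bt S m (by positivity)⟩
  have hm' : (0 : ℝ) < m := by exact_mod_cast hm
  calc (9 / 10 : ℝ) * #S = (1 - 1 / 10) * #S := by norm_num
    _ ≤ _ := one_sub_mul_card_le_card_filter_lt S (fun x => ∑ χ ∈ B, pDist p (χ * x) ^ 2)
        (fun x => sum_nonneg fun _ _ => sq_nonneg _) (by positivity : (0 : ℝ) < 10 * t / m * #B) ?_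
  rw [show (1 / 10 : ℝ) * (10 * t / m * #B) * #S ^ 2 = t * #S ^ 2 * #B / m by ring]
  exact (le_div_iff₀' hm').2 (mul_sum_sum_sum_Bt_pDist_sq_le S m)

theorem stmt10 (p : ℕ) [Fact p.Prime] (S : Finset (ZMod p)) (hS : S.Nonempty)
    (m : ℕ) (hm : 0 < m) (t : ℕ) (ht : 0 < t) :
    (9 / 10 : ℝ) * S.card ≤ ((Qt p S m t (10 * t / m)).card : ℝ) :=
  stmt10_general p S m hm t ht
end

section
/- For every h ≥ 0, every real constant C > 0, every prime p, and every S ⊆ ℤ_p with |S| ≥ 2: the sum over all integer tuples 1 ≤ m_1 < ... < m_h < |S| of Π_{i=0}^{h-1} (1/p + C·√(log|S|)/(|S|·√(m_{i+1} - m_i))) is at most (|S|/p + 2C·√(log|S|)/√|S|)^h, where m_0 = 0. -/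
open scoped Classical

/-- Extend a tuple `m : Fin h → ℕ` to indices `0, …, h` by `m_0 = 0`. -/
def extM0 (h : ℕ) (m : Fin h → ℕ) : ℕ → ℕ := fun i =>
  if hi : 0 < i ∧ i ≤ h then m ⟨i - 1, by omega⟩ else 0

/-!
Write `n = |S|` and `c = C √(log n)`. The gap map `(m_1, …, m_h) ↦ (m_1 - m_0, …, m_h - m_{h-1})`
is injective on increasing tuples (each `m_i` is a partial sum of the gaps) and sends
`1 ≤ m_1 < ⋯ < m_h < n` into `[1, n)ʰ`. Since every factor is nonnegative, the sum is at most
`(∑_{d=1}^{n-1} (1/p + c/(n√d)))ʰ`, and `∑_{d=1}^{n-1} 1/√d ≤ 2√n` bounds the base.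
-/

open Finset

theorem sum_Icc_one_div_sqrt_le (n : ℕ) : ∑ t ∈ Icc 1 n, 1 / √(t : ℝ) ≤ 2 * √(n : ℝ) := by
  induction n with
  | zero => simp
  | succ n ih =>
    rw [sum_Icc_succ_top (by omega)]
    have hpos : 0 < √((n : ℝ) + 1) := Real.sqrt_pos.2 (by positivity)
    -- `2(√(n+1) - √n) = 2/(√(n+1) + √n)`
    have step : 1 / √((n : ℝ) + 1) ≤ 2 * √((n : ℝ) + 1) - 2 * √(n : ℝ) := by
      rw [div_le_iff₀ hpos]
      have hsq : √((n : ℝ) + 1) ^ 2 = n + 1 := Real.sq_sqrt (by positivity)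
      have hle : √(n : ℝ) ≤ √((n : ℝ) + 1) := Real.sqrt_le_sqrt (by linarith)
      nlinarith [Real.sq_sqrt (Nat.cast_nonneg (α := ℝ) n)]
    push_cast
    linarith

theorem sum_Ico_add_div_mul_sqrt_le (n : ℕ) {a c : ℝ} (ha : 0 ≤ a) (hc : 0 ≤ c) :
    ∑ d ∈ Ico 1 n, (a + c / (n * √(d : ℝ))) ≤ n * a + 2 * c / √(n : ℝ) := by
  rw [sum_add_distrib, sum_const, nsmul_eq_mul]
  gcongr
  · exact_mod_cast (Nat.card_Ico 1 n).trans_le (Nat.sub_le n 1)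
  · calc ∑ d ∈ Ico 1 n, c / (n * √(d : ℝ))
        = c / n * ∑ d ∈ Ico 1 n, 1 / √(d : ℝ) := by
          rw [mul_sum]
          exact sum_congr rfl fun d _ => by rw [div_mul_eq_div_div, mul_one_div]
      _ ≤ c / n * ∑ d ∈ Icc 1 n, 1 / √(d : ℝ) := by
          have hsub := sum_le_sum_of_subset_of_nonneg (f := fun d : ℕ => 1 / √(d : ℝ))
            (Ico_subset_Icc_self (a := 1) (b := n)) fun _ _ _ => by positivity
          exact mul_le_mul_of_nonneg_left hsub (by positivity)
      _ ≤ c / n * (2 * √(n : ℝ)) := by gcongr; exact sum_Icc_one_div_sqrt_le n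
      _ = 2 * c / √(n : ℝ) := by
          rw [div_eq_mul_one_div (2 * c), ← Real.sqrt_div_self']; ring

theorem sum_prod_comp_le_pow_sum {α β R ι : Type*} [CommSemiring R] [PartialOrder R]
    [IsOrderedRing R] [Fintype ι] [DecidableEq ι] [DecidableEq β]
    {s : Finset α} {t : Finset β} {g : α → ι → β} {f : β → R} (hf : ∀ b ∈ t, 0 ≤ f b)
    (hg : Set.InjOn g s) (hgt : ∀ a ∈ s, ∀ i, g a i ∈ t) :
    ∑ a ∈ s, ∏ i, f (g a i) ≤ (∑ b ∈ t, f b) ^ Fintype.card ι := by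
  rw [← sum_image (f := fun d => ∏ i, f (d i)) hg, ← card_univ, ← prod_const, prod_univ_sum]
  refine sum_le_sum_of_subset_of_nonneg (fun d hd => ?_) fun d hd _ => ?_
  · obtain ⟨a, ha, rfl⟩ := mem_image.1 hd
    exact Fintype.mem_piFinset.2 (hgt a ha)
  · exact prod_nonneg fun i _ => hf _ (Fintype.mem_piFinset.1 hd i)

section Gaps

variable {h : ℕ} {m : Fin h → ℕ}

theorem extM0_zero : extM0 h m 0 = 0 := by simp [extM0]

theorem extM0_succ (i : Fin h) : extM0 h m (i + 1) = m i := by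
  simp [extM0, Nat.succ_le_of_lt i.2]

theorem extM0_le_extM0_succ (hm : Monotone m) {i : ℕ} (hi : i < h) :
    extM0 h m i ≤ extM0 h m (i + 1) := by
  rcases i with _ | i
  · simp [extM0_zero]
  · rw [extM0_succ ⟨i, by omega⟩, extM0_succ ⟨i + 1, hi⟩]
    exact hm (Fin.mk_le_mk.2 i.le_succ)

def gaps (h : ℕ) (m : Fin h → ℕ) (i : Fin h) : ℕ := extM0 h m (i + 1) - extM0 h m i

theorem extM0_eq_sum_range (hm : Monotone m) {k : ℕ} (hk : k ≤ h) :
    extM0 h m k = ∑ j ∈ range k, (extM0 h m (j + 1) - extM0 h m j) := by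
  induction k with
  | zero => simp [extM0_zero]
  | succ k ih =>
    rw [sum_range_succ, ← ih (by omega)]
    have := extM0_le_extM0_succ hm (i := k) (by omega)
    omega

theorem gaps_injOn : Set.InjOn (gaps h) {m | Monotone m} := by
  intro m hm m' hm' hgaps
  funext i
  have hsum : ∀ j ∈ range (i + 1),
      extM0 h m (j + 1) - extM0 h m j = extM0 h m' (j + 1) - extM0 h m' j :=
    fun j hj => congrFun hgaps ⟨j, by simp at hj; omega⟩
  rw [← extM0_succ (m := m) i, ← extM0_succ (m := m') i, extM0_eq_sum_range hm i.2,
    extM0_eq_sum_range hm' i.2, sum_congr rfl hsum]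

theorem gaps_mem_Ico (hm : StrictMono m) {n : ℕ} (hmn : ∀ i, m i ∈ Ico 1 n) (i : Fin h) :
    gaps h m i ∈ Ico 1 n := by
  have hi := mem_Ico.1 (hmn i)
  obtain ⟨_ | j, hj⟩ := i
  · rw [gaps, extM0_succ ⟨0, hj⟩, extM0_zero]
    exact mem_Ico.2 (by omega)
  · have hlt := hm (Fin.mk_lt_mk.2 j.lt_succ_self : (⟨j, by omega⟩ : Fin h) < ⟨j + 1, hj⟩)
    rw [gaps, extM0_succ ⟨j + 1, hj⟩, extM0_succ ⟨j, by omega⟩]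
    exact mem_Ico.2 (by omega)

theorem prod_range_extM0_sub {M : Type*} [CommMonoid M] (hm : Monotone m) (F : ℝ → M) :
    ∏ i ∈ range h, F ((extM0 h m (i + 1) : ℝ) - extM0 h m i) = ∏ i, F (gaps h m i) := by
  rw [← Fin.prod_univ_eq_prod_range (fun i => F ((extM0 h m (i + 1) : ℝ) - extM0 h m i))]
  refine prod_congr rfl fun i _ => ?_
  rw [gaps, Nat.cast_sub (extM0_le_extM0_succ hm i.2)]

end Gaps

theorem stmt14_general (h : ℕ) (C : ℝ) (hC : 0 < C) (p : ℕ)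
    (S : Finset (ZMod p)) :
    ∑ m ∈ (Fintype.piFinset fun _ : Fin h => Finset.Ico 1 S.card).filter
        (fun m => StrictMono m),
      ∏ i ∈ Finset.range h,
        (1 / (p : ℝ) + C * Real.sqrt (Real.log S.card) /
          (S.card * Real.sqrt ((extM0 h m (i + 1) : ℝ) - extM0 h m i))) ≤
      ((S.card : ℝ) / p + 2 * C * Real.sqrt (Real.log S.card) / Real.sqrt S.card) ^ h := by
  set n := S.card
  set c := C * √(Real.log n) with hc_def
  have hc : 0 ≤ c := by positivity
  have hf : ∀ d ∈ Ico 1 n, (0 : ℝ) ≤ 1 / p + c / (n * √(d : ℝ)) := fun _ _ => by positivity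
  have hmem : ∀ m ∈ (Fintype.piFinset fun _ : Fin h => Ico 1 n).filter (fun m => StrictMono m),
      StrictMono m ∧ ∀ i, m i ∈ Ico 1 n := fun m hm => by
    rw [mem_filter, Fintype.mem_piFinset] at hm
    exact hm.symm
  calc _ = ∑ m ∈ (Fintype.piFinset fun _ : Fin h => Ico 1 n).filter (fun m => StrictMono m),
          ∏ i, (1 / (p : ℝ) + c / (n * √(gaps h m i : ℝ))) :=
        sum_congr rfl fun m hm => prod_range_extM0_sub (hmem m hm).1.monotone
          fun x => 1 / (p : ℝ) + c / (n * √x)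
    _ ≤ (∑ d ∈ Ico 1 n, (1 / (p : ℝ) + c / (n * √(d : ℝ)))) ^ h := by
        simpa using sum_prod_comp_le_pow_sum hf
          (gaps_injOn.mono fun m hm => (hmem m hm).1.monotone)
          fun m hm => gaps_mem_Ico (hmem m hm).1 (hmem m hm).2
    _ ≤ _ := by
        refine pow_le_pow_left₀ (sum_nonneg hf) ?_ h
        refine (sum_Ico_add_div_mul_sqrt_le n (a := 1 / p) (by positivity) hc).trans_eq ?_
        rw [hc_def]
        ring

theorem stmt14 (h : ℕ) (C : ℝ) (hC : 0 < C) (p : ℕ) [Fact p.Prime]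
    (S : Finset (ZMod p)) (hS : 2 ≤ S.card) :
    ∑ m ∈ (Fintype.piFinset fun _ : Fin h => Finset.Ico 1 S.card).filter
        (fun m => StrictMono m),
      ∏ i ∈ Finset.range h,
        (1 / (p : ℝ) + C * Real.sqrt (Real.log S.card) /
          (S.card * Real.sqrt ((extM0 h m (i + 1) : ℝ) - extM0 h m i))) ≤
      ((S.card : ℝ) / p + 2 * C * Real.sqrt (Real.log S.card) / Real.sqrt S.card) ^ h :=
  stmt14_general h C hC p S
end
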